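/- arXiv:1801.06737 — 5 statements merged into one kernel-verified Lean document; each statement's English description precedes it below -/
import Mathlib

section
/- Fix an integer n ≥ 1, a transaction cost ε with 0 < ε < 1, and a real number p with 1/2 < p < 1 satisfying 2^n·p^n > 1 + ε. Define g_{n,ε} : [0, 1/(1+ε)) → ℝ by g_{n,ε}(K) = (1/n)·(p^n·log(1 + K·(2^n−1−ε)) + (1−p^n)·log(1 − K·(1+ε))). Then K_{n,ε}* = (2^n·p^n − ε − 1)/((ε+1)·(2^n − ε − 1)) lies in [0, 1/(1+ε)) and g_{n,ε} attains its maximum over [0, 1/(1+ε)) at K_{n,ε}*. -/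
set_option maxHeartbeats 1000000


/-- With transaction cost `0 < ε < 1`, win probability
`1/2 < p < 1` satisfying `2^n p^n > 1 + ε`, the fraction
`K_{n,ε}* = (2^n p^n - ε - 1)/((ε+1)(2^n - ε - 1))` lies in `[0, 1/(1+ε))`
and maximizes
`g_{n,ε}(K) = (1/n)(p^n log(1 + K(2^n-1-ε)) + (1-p^n) log(1 - K(1+ε)))`
over `[0, 1/(1+ε))`. -/
theorem stmt_3 (n : ℕ) (hn : 1 ≤ n) (ε : ℝ) (hε0 : 0 < ε) (hε1 : ε < 1)
    (p : ℝ) (hp : 1 / 2 < p) (hp1 : p < 1)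
    (hattr : 1 + ε < (2 : ℝ) ^ n * p ^ n)
    (g : ℝ → ℝ)
    (hg : ∀ K : ℝ, g K =
      (1 / (n : ℝ)) * (p ^ n * Real.log (1 + K * ((2 : ℝ) ^ n - 1 - ε))
        + (1 - p ^ n) * Real.log (1 - K * (1 + ε))))
    (Kstar : ℝ)
    (hKstar : Kstar = ((2 : ℝ) ^ n * p ^ n - ε - 1) / ((ε + 1) * ((2 : ℝ) ^ n - ε - 1))) :
    Kstar ∈ Set.Ico (0 : ℝ) (1 / (1 + ε)) ∧
      ∀ K ∈ Set.Ico (0 : ℝ) (1 / (1 + ε)), g K ≤ g Kstar := by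
  have hp0 : (0:ℝ) < p := lt_trans (by norm_num) hp
  set q : ℝ := p ^ n with hqdef
  have hq0 : 0 < q := pow_pos hp0 n
  have hq1 : q < 1 := pow_lt_one₀ hp0.le hp1 (by omega)
  have h2n : (2:ℝ) ≤ 2 ^ n := by
    calc (2:ℝ) = 2 ^ 1 := by norm_num
    _ ≤ 2 ^ n := pow_le_pow_right₀ (by norm_num) hn
  have hc : (0:ℝ) < (2:ℝ) ^ n - 1 - ε := by linarith
  have hm : (0:ℝ) < 1 + ε := by linarith
  set c : ℝ := (2:ℝ) ^ n - 1 - ε with hcdef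
  set m : ℝ := 1 + ε with hmdef
  have h2npos : (0:ℝ) < 2 ^ n := by linarith
  have hK' : Kstar = ((2:ℝ) ^ n * q - m) / (m * c) := by
    rw [hKstar, hmdef, hcdef]; ring
  have hnum : 0 < (2:ℝ) ^ n * q - m := by simp only [hmdef]; linarith
  have hK0 : 0 ≤ Kstar := by
    rw [hK']; positivity
  have hKlt : Kstar < 1 / m := by
    rw [hK', div_lt_div_iff₀ (by positivity) hm]
    have : (2:ℝ) ^ n * q < 2 ^ n := by nlinarith
    nlinarith
  refine ⟨⟨hK0, hKlt⟩, ?_⟩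
  -- values at Kstar
  have hAstar : 1 + Kstar * c = 2 ^ n * q / m := by
    rw [hK']
    field_simp
    ring
  have hBstar : 1 - Kstar * m = 2 ^ n * (1 - q) / c := by
    rw [hK']
    field_simp
    ring
  have hAstarpos : 0 < 1 + Kstar * c := by rw [hAstar]; positivity
  have hBstarpos : 0 < 1 - Kstar * m := by
    rw [hBstar]
    have : 0 < 1 - q := by linarith
    positivity
  intro K hK
  obtain ⟨hK0', hKlt'⟩ := hK
  have hA : 0 < 1 + K * c := by nlinarith
  have hB : 0 < 1 - K * m := by
    have : K * m < 1 := by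
      have := (lt_div_iff₀ hm).mp hKlt'
      linarith
    linarith
  rw [hg K, hg Kstar]
  have hn0 : (0:ℝ) < (n : ℝ) := by exact_mod_cast Nat.pos_of_ne_zero (by omega)
  have hlogA : Real.log (1 + K * c) - Real.log (1 + Kstar * c)
      ≤ (1 + K * c) / (1 + Kstar * c) - 1 := by
    rw [← Real.log_div hA.ne' hAstarpos.ne']
    exact Real.log_le_sub_one_of_pos (by positivity)
  have hlogB : Real.log (1 - K * m) - Real.log (1 - Kstar * m)
      ≤ (1 - K * m) / (1 - Kstar * m) - 1 := by
    rw [← Real.log_div hB.ne' hBstarpos.ne']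
    exact Real.log_le_sub_one_of_pos (by positivity)
  have hkey : q * ((1 + K * c) / (1 + Kstar * c) - 1)
      + (1 - q) * ((1 - K * m) / (1 - Kstar * m) - 1) = 0 := by
    rw [hAstar, hBstar]
    have h1q : (0:ℝ) < 1 - q := by linarith
    field_simp
    ring
  have hmain : q * Real.log (1 + K * c) + (1 - q) * Real.log (1 - K * m)
      ≤ q * Real.log (1 + Kstar * c) + (1 - q) * Real.log (1 - Kstar * m) := by
    nlinarith [mul_le_mul_of_nonneg_left hlogA hq0.le,
      mul_le_mul_of_nonneg_left hlogB (by linarith : (0:ℝ) ≤ 1 - q)]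
  have h1n : 0 ≤ 1 / (n:ℝ) := by positivity
  exact mul_le_mul_of_nonneg_left hmain h1n
end

section
/- Fix an integer n ≥ 1, a transaction cost ε with 0 < ε < 1, and a real number p with 1/2 < p < 1 satisfying 2^n·p^n > 1 + ε. Define g_{n,ε}(K) = (1/n)·(p^n·log(1 + K·(2^n−1−ε)) + (1−p^n)·log(1 − K·(1+ε))) and K_{n,ε}* = (2^n·p^n − ε − 1)/((ε+1)·(2^n − ε − 1)). Then g_{n,ε}(K_{n,ε}*) = (1/n)·(p^n·log(2^n·p^n/(ε+1)) + (1−p^n)·log(2^n·(1−p^n)/(2^n − ε − 1))). -/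
/-- With transaction cost `0 < ε < 1`, win probability
`1/2 < p < 1` satisfying `2^n p^n > 1 + ε`, at the optimal fraction
`K_{n,ε}* = (2^n p^n - ε - 1)/((ε+1)(2^n - ε - 1))` the expected logarithmic
growth equals
`(1/n)(p^n log(2^n p^n/(ε+1)) + (1-p^n) log(2^n (1-p^n)/(2^n-ε-1)))`. -/
theorem stmt_4 (n : ℕ) (hn : 1 ≤ n) (ε : ℝ) (hε0 : 0 < ε) (hε1 : ε < 1)
    (p : ℝ) (hp : 1 / 2 < p) (hp1 : p < 1)
    (hattr : 1 + ε < (2 : ℝ) ^ n * p ^ n)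
    (g : ℝ → ℝ)
    (hg : ∀ K : ℝ, g K =
      (1 / (n : ℝ)) * (p ^ n * Real.log (1 + K * ((2 : ℝ) ^ n - 1 - ε))
        + (1 - p ^ n) * Real.log (1 - K * (1 + ε))))
    (Kstar : ℝ)
    (hKstar : Kstar = ((2 : ℝ) ^ n * p ^ n - ε - 1) / ((ε + 1) * ((2 : ℝ) ^ n - ε - 1))) :
    g Kstar = (1 / (n : ℝ)) *
      (p ^ n * Real.log ((2 : ℝ) ^ n * p ^ n / (ε + 1))
        + (1 - p ^ n) * Real.log ((2 : ℝ) ^ n * (1 - p ^ n) / ((2 : ℝ) ^ n - ε - 1))) := by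
  have h2n : (2 : ℝ) ≤ (2 : ℝ) ^ n := by
    calc (2 : ℝ) = 2 ^ 1 := (pow_one 2).symm
    _ ≤ 2 ^ n := pow_le_pow_right₀ one_le_two hn
  have hd1 : (ε + 1 : ℝ) ≠ 0 := by linarith
  have hd2 : ((2 : ℝ) ^ n - ε - 1) ≠ 0 := by linarith
  have e1 : 1 + Kstar * ((2 : ℝ) ^ n - 1 - ε) = (2 : ℝ) ^ n * p ^ n / (ε + 1) := by
    rw [hKstar]; field_simp; ring
  have e2 : 1 - Kstar * (1 + ε) = (2 : ℝ) ^ n * (1 - p ^ n) / ((2 : ℝ) ^ n - ε - 1) := by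
    rw [hKstar]; field_simp; ring
  rw [hg, e1, e2]
end

section
/- Fix an integer n ≥ 1, a transaction cost ε with 0 < ε < 1, and a real number p with 1/2 < p < 1 satisfying 2^n·p^n ≤ 1 + ε. Define g_{n,ε}(K) = (1/n)·(p^n·log(1 + K·(2^n−1−ε)) + (1−p^n)·log(1 − K·(1+ε))). Then g_{n,ε}(K) ≤ 0 = g_{n,ε}(0) for every K ∈ [0, 1/(1+ε)); i.e. the maximum over the survival set is 0, attained at K = 0. -/
/-- With transaction cost `0 < ε < 1` and win probability
`1/2 < p < 1` satisfying `2^n p^n ≤ 1 + ε`, the growth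
`g_{n,ε}(K) = (1/n)(p^n log(1 + K(2^n-1-ε)) + (1-p^n) log(1 - K(1+ε)))`
satisfies `g_{n,ε}(K) ≤ 0 = g_{n,ε}(0)` on the survival set `[0, 1/(1+ε))`. -/
theorem stmt_5 (n : ℕ) (hn : 1 ≤ n) (ε : ℝ) (hε0 : 0 < ε) (hε1 : ε < 1)
    (p : ℝ) (hp : 1 / 2 < p) (hp1 : p < 1)
    (hunattr : (2 : ℝ) ^ n * p ^ n ≤ 1 + ε)
    (g : ℝ → ℝ)
    (hg : ∀ K : ℝ, g K =
      (1 / (n : ℝ)) * (p ^ n * Real.log (1 + K * ((2 : ℝ) ^ n - 1 - ε))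
        + (1 - p ^ n) * Real.log (1 - K * (1 + ε)))) :
    (∀ K ∈ Set.Ico (0 : ℝ) (1 / (1 + ε)), g K ≤ 0) ∧ g 0 = 0 := by
  constructor
  · intro K hK
    obtain ⟨hK0, hKlt⟩ := hK
    rw [hg]
    have hp0 : (0:ℝ) < p := by linarith
    have hpn0 : (0:ℝ) < p ^ n := pow_pos hp0 n
    have hpn1 : p ^ n ≤ 1 := pow_le_one₀ hp0.le hp1.le
    have hε1' : (0:ℝ) < 1 + ε := by linarith
    have h2n : (2:ℝ) ≤ (2:ℝ) ^ n := by
      calc (2:ℝ) = 2 ^ 1 := (pow_one 2).symm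
        _ ≤ 2 ^ n := pow_le_pow_right₀ (by norm_num) hn
    have hx : (0:ℝ) < 1 + K * ((2:ℝ) ^ n - 1 - ε) := by nlinarith
    have hy : (0:ℝ) < 1 - K * (1 + ε) := by
      have := (lt_div_iff₀ hε1').mp hKlt
      linarith
    have l1 := Real.log_le_sub_one_of_pos hx
    have l2 := Real.log_le_sub_one_of_pos hy
    have hkey : K * ((2:ℝ) ^ n * p ^ n - (1 + ε)) ≤ 0 :=
      mul_nonpos_of_nonneg_of_nonpos hK0 (by linarith)
    have hS : p ^ n * Real.log (1 + K * ((2:ℝ) ^ n - 1 - ε))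
        + (1 - p ^ n) * Real.log (1 - K * (1 + ε)) ≤ 0 := by
      nlinarith [mul_le_mul_of_nonneg_left l1 hpn0.le,
        mul_le_mul_of_nonneg_left l2 (by linarith : (0:ℝ) ≤ 1 - p ^ n)]
    have hninv : (0:ℝ) ≤ 1 / (n : ℝ) := by positivity
    exact mul_nonpos_of_nonneg_of_nonpos hninv hS
  · rw [hg]; simp
end

section
/- Let (Ω, μ) be a probability space and X : ℕ → Ω → ℝ an independent, identically distributed sequence of random variables taking values almost surely in [m, M] with −1 < m < 0 < M < ∞. For n ≥ 1 let 𝒳_n = (∏_{k=0}^{n−1}(1 + X_k)) − 1. If E[1/(1 + X_0)] ≤ 1, then the function K ↦ E[log(1 + K·𝒳_n)] is monotone nondecreasing on [0,1]. -/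
open MeasureTheory ProbabilityTheory

/-- For an i.i.d. sequence of returns `X k` with values a.s. in
`[m, M]`, `-1 < m < 0 < M`, and `𝒳_n = ∏_{k<n} (1 + X k) - 1`, if the
sufficient attractiveness inequality `E[1/(1 + X 0)] ≤ 1` holds, then
`K ↦ E[log(1 + K 𝒳_n)]` is monotone nondecreasing on `[0,1]`. -/
theorem stmt_11 {Ω : Type*} [MeasurableSpace Ω] (μ : Measure Ω)
    [IsProbabilityMeasure μ] (X : ℕ → Ω → ℝ)
    (hmeas : ∀ i, Measurable (X i))
    (hindep : iIndepFun X μ)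
    (hident : ∀ i, IdentDistrib (X i) (X 0) μ μ)
    (m M : ℝ) (hm : -1 < m) (hm0 : m < 0) (hM : 0 < M)
    (hbound : ∀ i, ∀ᵐ ω ∂μ, X i ω ∈ Set.Icc m M)
    (n : ℕ) (hn : 1 ≤ n)
    (hSA : (∫ ω, 1 / (1 + X 0 ω) ∂μ) ≤ 1) :
    MonotoneOn
      (fun K : ℝ =>
        ∫ ω, Real.log (1 + K * ((∏ k ∈ Finset.range n, (1 + X k ω)) - 1)) ∂μ)
      (Set.Icc (0 : ℝ) 1) := by
  have hm1 : (0:ℝ) < 1 + m := by linarith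
  set P : Ω → ℝ := fun ω => ∏ k ∈ Finset.range n, (1 + X k ω) with hP
  have hPmeas : Measurable P :=
    Finset.measurable_prod _ fun i _ => measurable_const.add (hmeas i)
  set a : ℝ := (1 + m) ^ n with ha
  set b : ℝ := (1 + M) ^ n with hb
  have ha0 : 0 < a := pow_pos hm1 n
  have hb0 : 0 < b := pow_pos (by linarith) n
  -- a.e. bounds on P
  have hPbd : ∀ᵐ ω ∂μ, a ≤ P ω ∧ P ω ≤ b := by
    have hall : ∀ᵐ ω ∂μ, ∀ i, X i ω ∈ Set.Icc m M := ae_all_iff.2 hbound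
    filter_upwards [hall] with ω hω
    constructor
    · calc a = ∏ _k ∈ Finset.range n, (1 + m) := by simp [ha]
        _ ≤ P ω := Finset.prod_le_prod (fun i _ => le_of_lt hm1)
            (fun i _ => by have := (hω i).1; linarith)
    · calc P ω ≤ ∏ _k ∈ Finset.range n, (1 + M) :=
            Finset.prod_le_prod (fun i _ => by have := (hω i).1; linarith)
            (fun i _ => by have := (hω i).2; linarith)
        _ = b := by simp [hb]
  -- the family Y k = (1 + X k)⁻¹
  set Y : ℕ → Ω → ℝ := fun k ω => (1 + X k ω)⁻¹ with hYdef
  have hYmeas : ∀ k, Measurable (Y k) := fun k => (measurable_const.add (hmeas k)).inv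
  have hYindep : iIndepFun Y μ :=
    hindep.comp (fun _ t => (1 + t)⁻¹) fun _ => (measurable_const.add measurable_id).inv
  set c : ℝ := ∫ ω, Y 0 ω ∂μ with hc
  have hYint : ∀ k, ∫ ω, Y k ω ∂μ = c := by
    intro k
    exact ((hident k).comp (u := fun t : ℝ => (1 + t)⁻¹)
      ((measurable_const.add measurable_id).inv)).integral_eq
  -- product formula
  have hprod : ∀ N : ℕ, ∫ ω, ∏ k ∈ Finset.range N, Y k ω ∂μ = c ^ N := by
    intro N
    induction N with
    | zero => simp
    | succ N ih =>
      have h1 : IndepFun (∏ j ∈ Finset.range N, Y j) (Y N) μ :=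
        hYindep.indepFun_prod_range_succ hYmeas N
      have hfun : (∏ j ∈ Finset.range N, Y j) = fun ω => ∏ j ∈ Finset.range N, Y j ω := by
        ext ω; simp
      have hmP : AEStronglyMeasurable (∏ j ∈ Finset.range N, Y j) μ := by
        rw [hfun]
        exact (Finset.measurable_prod _ fun i _ => hYmeas i).aestronglyMeasurable
      have h2 := h1.integral_mul_eq_mul_integral hmP (hYmeas N).aestronglyMeasurable
      have h3 : ∫ ω, ∏ k ∈ Finset.range (N + 1), Y k ω ∂μ
          = ∫ ω, ((∏ j ∈ Finset.range N, Y j) * Y N) ω ∂μ := by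
        apply integral_congr_ae
        filter_upwards with ω
        simp [Finset.prod_range_succ, mul_comm]
      have h4 : integral μ (∏ j ∈ Finset.range N, Y j)
          = ∫ ω, ∏ k ∈ Finset.range N, Y k ω ∂μ := by rw [hfun]
      rw [h3]
      show integral μ ((∏ j ∈ Finset.range N, Y j) * Y N) = c ^ (N + 1)
      rw [h2, h4, ih, hYint N, pow_succ]
  -- c ∈ [0,1]
  have hY0bd : ∀ᵐ ω ∂μ, 0 ≤ Y 0 ω ∧ Y 0 ω ≤ (1 + m)⁻¹ := by
    filter_upwards [hbound 0] with ω hω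
    have h1 : 0 < 1 + X 0 ω := by have := hω.1; linarith
    exact ⟨le_of_lt (inv_pos.2 h1), inv_anti₀ hm1 (by have := hω.1; linarith)⟩
  have hc0 : 0 ≤ c := integral_nonneg_of_ae (hY0bd.mono fun ω h => h.1)
  have hc1 : c ≤ 1 := by
    have : (∫ ω, 1 / (1 + X 0 ω) ∂μ) = c := by
      rw [hc]; apply integral_congr_ae; filter_upwards with ω; simp [one_div, Y]
    linarith
  have hcn : c ^ n ≤ 1 := pow_le_one₀ hc0 hc1
  -- ∫ P⁻¹ = c ^ n
  have hPinv : ∫ ω, (P ω)⁻¹ ∂μ = c ^ n := by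
    rw [← hprod n]
    apply integral_congr_ae
    filter_upwards with ω
    simp [hP, Finset.prod_inv_distrib, Y]
  -- integrability of 1 - P⁻¹
  have hPinv_int : Integrable (fun ω => (P ω)⁻¹) μ := by
    apply (integrable_const a⁻¹).mono' hPmeas.inv.aestronglyMeasurable
    filter_upwards [hPbd] with ω hω
    have h1 : 0 < P ω := lt_of_lt_of_le ha0 hω.1
    have h2 : (P ω)⁻¹ ≤ a⁻¹ := inv_anti₀ ha0 hω.1
    have h3 : 0 < (P ω)⁻¹ := inv_pos.2 h1
    change ‖(P ω)⁻¹‖ ≤ _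
    rw [Real.norm_eq_abs, abs_le]
    constructor <;> nlinarith [inv_pos.2 ha0]
  have hg_int : Integrable (fun ω => 1 - (P ω)⁻¹) μ := (integrable_const 1).sub hPinv_int
  have hg_val : ∫ ω, (1 - (P ω)⁻¹) ∂μ = 1 - c ^ n := by
    rw [integral_sub (integrable_const 1) hPinv_int, hPinv]
    simp
  -- integrability of log terms, uniformly for K ∈ [0,1]
  set a' : ℝ := min 1 a with ha'
  set b' : ℝ := max 1 b with hb'
  have ha'0 : 0 < a' := lt_min one_pos ha0
  have hb'0 : 0 < b' := lt_of_lt_of_le one_pos (le_max_left _ _)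
  have hbdK : ∀ K : ℝ, K ∈ Set.Icc (0:ℝ) 1 → ∀ᵐ ω ∂μ,
      a' ≤ 1 + K * (P ω - 1) ∧ 1 + K * (P ω - 1) ≤ b' := by
    intro K hK
    obtain ⟨hK0, hK1⟩ := hK
    filter_upwards [hPbd] with ω hω
    obtain ⟨h1, h2⟩ := hω
    constructor
    · have hA : a' ≤ 1 := min_le_left _ _
      have hB : a' ≤ a := min_le_right _ _
      nlinarith
    · have hA : 1 ≤ b' := le_max_left _ _
      have hB : b ≤ b' := le_max_right _ _
      nlinarith
  have hint : ∀ K : ℝ, K ∈ Set.Icc (0:ℝ) 1 →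
      Integrable (fun ω => Real.log (1 + K * (P ω - 1))) μ := by
    intro K hK
    apply (integrable_const (|Real.log a'| + |Real.log b'|)).mono'
      ((measurable_const.add ((hPmeas.sub measurable_const).const_mul K)).log.aestronglyMeasurable)
    filter_upwards [hbdK K hK] with ω hω
    obtain ⟨h1, h2⟩ := hω
    have h0 : 0 < 1 + K * (P ω - 1) := lt_of_lt_of_le ha'0 h1
    change ‖Real.log (1 + K * (P ω - 1))‖ ≤ _
    rw [Real.norm_eq_abs, abs_le]
    have l1 : Real.log a' ≤ Real.log (1 + K * (P ω - 1)) := Real.log_le_log ha'0 h1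
    have l2 : Real.log (1 + K * (P ω - 1)) ≤ Real.log b' := Real.log_le_log h0 h2
    constructor
    · have := neg_abs_le (Real.log a')
      have := abs_nonneg (Real.log b')
      linarith
    · have := le_abs_self (Real.log b')
      have := abs_nonneg (Real.log a')
      linarith
  -- main monotonicity
  intro K₁ hK₁ K₂ hK₂ hle
  simp only
  have key : ∀ᵐ ω ∂μ,
      Real.log (1 + K₁ * (P ω - 1)) + (K₂ - K₁) * (1 - (P ω)⁻¹)
        ≤ Real.log (1 + K₂ * (P ω - 1)) := by
    filter_upwards [hbdK K₁ hK₁, hbdK K₂ hK₂, hPbd] with ω h1 h2 h3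
    set p := P ω
    set t₁ := 1 + K₁ * (p - 1) with ht₁
    set t₂ := 1 + K₂ * (p - 1) with ht₂
    have ht₁0 : 0 < t₁ := lt_of_lt_of_le ha'0 h1.1
    have ht₂0 : 0 < t₂ := lt_of_lt_of_le ha'0 h2.1
    have hp0 : 0 < p := lt_of_lt_of_le ha0 h3.1
    have hlog : Real.log t₁ - Real.log t₂ ≤ t₁ / t₂ - 1 := by
      have := Real.log_le_sub_one_of_pos (div_pos ht₁0 ht₂0)
      rwa [Real.log_div (ne_of_gt ht₁0) (ne_of_gt ht₂0)] at this
    have halg : (K₂ - K₁) * (1 - p⁻¹) ≤ 1 - t₁ / t₂ := by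
      have e : (1 - t₁ / t₂) - (K₂ - K₁) * (1 - p⁻¹)
          = ((K₂ - K₁) * (1 - K₂) * (p - 1) ^ 2) / (t₂ * p) := by
        have hne : t₂ ≠ 0 := ne_of_gt ht₂0
        field_simp
        rw [ht₁, ht₂]
        ring
      rw [← sub_nonneg, e]
      apply div_nonneg _ (le_of_lt (mul_pos ht₂0 hp0))
      have hK21 : 0 ≤ K₂ - K₁ := sub_nonneg.2 hle
      have hK2 : 0 ≤ 1 - K₂ := sub_nonneg.2 hK₂.2
      have hsq : 0 ≤ (p - 1) ^ 2 := sq_nonneg _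
      exact mul_nonneg (mul_nonneg hK21 hK2) hsq
    linarith
  calc (∫ ω, Real.log (1 + K₁ * ((∏ k ∈ Finset.range n, (1 + X k ω)) - 1)) ∂μ)
      ≤ (∫ ω, Real.log (1 + K₁ * (P ω - 1)) ∂μ) + (K₂ - K₁) * (1 - c ^ n) := by
        have h0 : 0 ≤ (K₂ - K₁) * (1 - c ^ n) :=
          mul_nonneg (sub_nonneg.2 hle) (sub_nonneg.2 hcn)
        simp only [hP]
        linarith
    _ = ∫ ω, (Real.log (1 + K₁ * (P ω - 1)) + (K₂ - K₁) * (1 - (P ω)⁻¹)) ∂μ := by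
        rw [integral_add (hint K₁ hK₁) (hg_int.const_mul _)]
        rw [integral_const_mul, hg_val]
    _ ≤ ∫ ω, Real.log (1 + K₂ * (P ω - 1)) ∂μ :=
        integral_mono_ae ((hint K₁ hK₁).add (hg_int.const_mul _)) (hint K₂ hK₂) key
end

section
/- Let (Ω, μ) be a probability space and X : ℕ → Ω → ℝ an independent, identically distributed sequence of random variables taking values almost surely in [m, M] with −1 < m < 0 < M < ∞. For n ≥ 1 let 𝒳_n = (∏_{k=0}^{n−1}(1 + X_k)) − 1. If E[X_0] ≤ 0, then for every n ≥ 1 and every K ∈ [0,1], E[log(1 + K·𝒳_n)] ≤ 0; hence the maximum of the expected logarithmic growth over K ∈ [0,1] equals 0 and is attained at K = 0. -/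
open MeasureTheory ProbabilityTheory

/-- For an i.i.d. sequence of returns `X k` with values a.s. in
`[m, M]`, `-1 < m < 0 < M`, and `𝒳_n = ∏_{k<n} (1 + X k) - 1`, if
`E[X 0] ≤ 0` then for every `n ≥ 1` and every `K ∈ [0,1]`,
`E[log(1 + K 𝒳_n)] ≤ 0`; and the value at `K = 0` is `0`, so the maximum over
`[0,1]` is `0`, attained at `K = 0`. -/
theorem stmt_18 {Ω : Type*} [MeasurableSpace Ω] (μ : Measure Ω)
    [IsProbabilityMeasure μ] (X : ℕ → Ω → ℝ)
    (hmeas : ∀ i, Measurable (X i))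
    (hindep : iIndepFun X μ)
    (hident : ∀ i, IdentDistrib (X i) (X 0) μ μ)
    (m M : ℝ) (hm : -1 < m) (hm0 : m < 0) (hM : 0 < M)
    (hbound : ∀ i, ∀ᵐ ω ∂μ, X i ω ∈ Set.Icc m M)
    (hneg : (∫ ω, X 0 ω ∂μ) ≤ 0) :
    ∀ n : ℕ, 1 ≤ n →
      (∀ K ∈ Set.Icc (0 : ℝ) 1,
        (∫ ω, Real.log (1 + K * ((∏ k ∈ Finset.range n, (1 + X k ω)) - 1)) ∂μ) ≤ 0) ∧
      (∫ ω, Real.log (1 + (0 : ℝ) * ((∏ k ∈ Finset.range n, (1 + X k ω)) - 1)) ∂μ) = 0 := by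
  -- the shifted variables Y k = 1 + X k
  set Y : ℕ → Ω → ℝ := fun k ω => 1 + X k ω with hY
  have hYmeas : ∀ k, Measurable (Y k) := fun k => (measurable_const.add (hmeas k))
  have hYindep : iIndepFun Y μ :=
    hindep.comp (fun _ => fun x : ℝ => 1 + x) (fun _ => measurable_const.add measurable_id)
  have hm1 : (0:ℝ) < 1 + m := by linarith
  -- integrability of X 0
  have hb0 : ∀ᵐ ω ∂μ, ‖X 0 ω‖ ≤ max |m| |M| := by
    filter_upwards [hbound 0] with ω hω
    rw [Real.norm_eq_abs, abs_le]
    constructor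
    · calc -(max |m| |M|) ≤ -|m| := by simp [neg_le_neg_iff, le_max_left]
        _ ≤ m := neg_abs_le m
        _ ≤ X 0 ω := hω.1
    · calc X 0 ω ≤ M := hω.2
        _ ≤ |M| := le_abs_self M
        _ ≤ max |m| |M| := le_max_right _ _
  have hX0int : Integrable (X 0) μ :=
    (integrable_const (max |m| |M|)).mono' (hmeas 0).aestronglyMeasurable hb0
  -- expectation bounds
  set E : ℝ := ∫ ω, X 0 ω ∂μ with hE
  have hEm : m ≤ E := by
    have : ∫ ω, m ∂μ ≤ ∫ ω, X 0 ω ∂μ := by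
      refine integral_mono_ae (integrable_const m) hX0int ?_
      filter_upwards [hbound 0] with ω hω using hω.1
    simpa using this
  have hE0 : 0 < 1 + E := by linarith
  have hE1 : 1 + E ≤ 1 := by linarith
  -- integral of Y k is 1 + E
  have hYint : ∀ k, (∫ ω, Y k ω ∂μ) = 1 + E := by
    intro k
    have h1 : (∫ ω, X k ω ∂μ) = E := (hident k).integral_eq
    have : (∫ ω, (1 + X k ω) ∂μ) = (∫ ω, (1:ℝ) ∂μ) + ∫ ω, X k ω ∂μ := by
      refine integral_add (integrable_const 1) ?_
      have hbk : ∀ᵐ ω ∂μ, ‖X k ω‖ ≤ max |m| |M| := by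
        filter_upwards [hbound k] with ω hω
        rw [Real.norm_eq_abs, abs_le]
        refine ⟨?_, ?_⟩
        · calc -(max |m| |M|) ≤ -|m| := by simp [neg_le_neg_iff, le_max_left]
            _ ≤ m := neg_abs_le m
            _ ≤ X k ω := hω.1
        · calc X k ω ≤ M := hω.2
            _ ≤ |M| := le_abs_self M
            _ ≤ max |m| |M| := le_max_right _ _
      exact (integrable_const (max |m| |M|)).mono' (hmeas k).aestronglyMeasurable hbk
    simpa [hY, h1] using this
  -- integral of the product
  have hprod : ∀ n : ℕ, (∫ ω, ∏ k ∈ Finset.range n, Y k ω ∂μ) = (1 + E) ^ n := by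
    intro n
    induction n with
    | zero => simp
    | succ n ih =>
      have hPeq : (∏ k ∈ Finset.range n, Y k) = fun ω => ∏ k ∈ Finset.range n, Y k ω := by
        ext ω; simp
      have hPm : AEStronglyMeasurable (∏ k ∈ Finset.range n, Y k) μ := by
        rw [hPeq]
        exact (Finset.measurable_prod _ fun k _ => hYmeas k).aestronglyMeasurable
      have hmul : (∫ ω, ((∏ k ∈ Finset.range n, Y k) * Y n) ω ∂μ)
          = (∫ ω, (∏ k ∈ Finset.range n, Y k) ω ∂μ) * ∫ ω, Y n ω ∂μ :=
        IndepFun.integral_mul_eq_mul_integral (hYindep.indepFun_prod_range_succ hYmeas n) hPm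
          (hYmeas n).aestronglyMeasurable
      have hcongr : (∫ ω, ∏ k ∈ Finset.range (n+1), Y k ω ∂μ)
          = ∫ ω, ((∏ k ∈ Finset.range n, Y k) * Y n) ω ∂μ := by
        refine integral_congr_ae (Filter.Eventually.of_forall fun ω => ?_)
        simp [Finset.prod_range_succ]
      have hih : (∫ ω, (∏ k ∈ Finset.range n, Y k) ω ∂μ) = (1 + E) ^ n := by
        simpa using ih
      rw [hcongr, hmul, hih, hYint n, pow_succ]
  intro n hn
  -- a.e. bounds for the product
  have hfbound : ∀ᵐ ω ∂μ, (1+m)^n ≤ (∏ k ∈ Finset.range n, Y k ω)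
      ∧ (∏ k ∈ Finset.range n, Y k ω) ≤ (1+M)^n := by
    have hall : ∀ᵐ ω ∂μ, ∀ k, X k ω ∈ Set.Icc m M := ae_all_iff.2 hbound
    filter_upwards [hall] with ω hω
    have h1 : (1+m)^n ≤ ∏ k ∈ Finset.range n, Y k ω := by
      have : ∏ k ∈ Finset.range n, (1+m) ≤ ∏ k ∈ Finset.range n, Y k ω := by
        refine Finset.prod_le_prod (fun k _ => hm1.le) (fun k _ => ?_)
        have := (hω k).1
        show 1 + m ≤ 1 + X k ω
        linarith
      simpa [Finset.prod_const, Finset.card_range] using this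
    have h2 : (∏ k ∈ Finset.range n, Y k ω) ≤ (1+M)^n := by
      have : (∏ k ∈ Finset.range n, Y k ω) ≤ ∏ k ∈ Finset.range n, (1+M) := by
        refine Finset.prod_le_prod (fun k _ => ?_) (fun k _ => ?_)
        · have := (hω k).1
          show (0:ℝ) ≤ 1 + X k ω
          linarith
        · have := (hω k).2
          show 1 + X k ω ≤ 1 + M
          linarith
      simpa [Finset.prod_const, Finset.card_range] using this
    exact ⟨h1, h2⟩
  have hfmeas : Measurable (fun ω => ∏ k ∈ Finset.range n, Y k ω) :=
    Finset.measurable_prod _ fun k _ => hYmeas k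
  have hfint : Integrable (fun ω => ∏ k ∈ Finset.range n, Y k ω) μ := by
    refine (integrable_const (max ((1+m)^n) ((1+M)^n))).mono'
      hfmeas.aestronglyMeasurable ?_
    filter_upwards [hfbound] with ω hω
    rw [Real.norm_eq_abs, abs_le]
    have h0 : (0:ℝ) < (1+m)^n := pow_pos hm1 n
    constructor
    · have hnn : (0:ℝ) ≤ max ((1+m)^n) ((1+M)^n) := le_trans h0.le (le_max_left _ _)
      calc -(max ((1+m)^n) ((1+M)^n)) ≤ 0 := by linarith
        _ ≤ (1+m)^n := h0.le
        _ ≤ _ := hω.1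
    · exact hω.2.trans (le_max_right _ _)
  constructor
  · -- the main inequality
    intro K hK
    obtain ⟨hK0, hK1⟩ := hK
    set c : ℝ := (1+m)^n with hc
    set C : ℝ := (1+M)^n with hC
    have hcpos : 0 < c := pow_pos hm1 n
    have hCpos : 0 < C := pow_pos (by linarith) n
    -- positivity and bounds of 1 + K(f - 1)
    have hlopos : 0 < 1 - K + K * c := by
      rcases le_or_gt c 1 with h | h
      · nlinarith
      · nlinarith
    have hbnd : ∀ᵐ ω ∂μ,
        1 - K + K * c ≤ 1 + K * ((∏ k ∈ Finset.range n, Y k ω) - 1)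
        ∧ 1 + K * ((∏ k ∈ Finset.range n, Y k ω) - 1) ≤ 1 - K + K * C := by
      filter_upwards [hfbound] with ω hω
      constructor
      · nlinarith [hω.1]
      · nlinarith [hω.2]
    have hgmeas : Measurable (fun ω =>
        Real.log (1 + K * ((∏ k ∈ Finset.range n, Y k ω) - 1))) :=
      Real.measurable_log.comp (measurable_const.add (measurable_const.mul (hfmeas.sub measurable_const)))
    have hgint : Integrable (fun ω =>
        Real.log (1 + K * ((∏ k ∈ Finset.range n, Y k ω) - 1))) μ := by
      refine (integrable_const (max |Real.log (1 - K + K * c)| |Real.log (1 - K + K * C)|)).mono'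
        hgmeas.aestronglyMeasurable ?_
      filter_upwards [hbnd] with ω hω
      rw [Real.norm_eq_abs, abs_le]
      have hxpos : 0 < 1 + K * ((∏ k ∈ Finset.range n, Y k ω) - 1) := lt_of_lt_of_le hlopos hω.1
      constructor
      · calc -(max |Real.log (1 - K + K * c)| |Real.log (1 - K + K * C)|)
            ≤ -|Real.log (1 - K + K * c)| := by
              simp [neg_le_neg_iff, le_max_left]
          _ ≤ Real.log (1 - K + K * c) := neg_abs_le _
          _ ≤ _ := Real.log_le_log hlopos hω.1
      · calc Real.log (1 + K * ((∏ k ∈ Finset.range n, Y k ω) - 1))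
            ≤ Real.log (1 - K + K * C) := Real.log_le_log hxpos hω.2
          _ ≤ |Real.log (1 - K + K * C)| := le_abs_self _
          _ ≤ _ := le_max_right _ _
    have hKfint : Integrable (fun ω => K * ((∏ k ∈ Finset.range n, Y k ω) - 1)) μ :=
      ((hfint.sub (integrable_const 1)).const_mul K)
    have hle : (∫ ω, Real.log (1 + K * ((∏ k ∈ Finset.range n, Y k ω) - 1)) ∂μ)
        ≤ ∫ ω, K * ((∏ k ∈ Finset.range n, Y k ω) - 1) ∂μ := by
      refine integral_mono_ae hgint hKfint ?_
      filter_upwards [hbnd] with ω hω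
      have hxpos : 0 < 1 + K * ((∏ k ∈ Finset.range n, Y k ω) - 1) := lt_of_lt_of_le hlopos hω.1
      have := Real.log_le_sub_one_of_pos hxpos
      linarith
    have hrhs : (∫ ω, K * ((∏ k ∈ Finset.range n, Y k ω) - 1) ∂μ)
        = K * ((1 + E)^n - 1) := by
      rw [integral_const_mul]
      rw [integral_sub hfint (integrable_const 1)]
      simp [hprod n]
    have hpow : (1 + E)^n ≤ 1 := pow_le_one₀ hE0.le hE1
    have : (∫ ω, Real.log (1 + K * ((∏ k ∈ Finset.range n, Y k ω) - 1)) ∂μ) ≤ 0 := by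
      rw [hrhs] at hle
      nlinarith
    simpa [hY] using this
  · simp
end
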